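/- For an unweighted connected graph with m edges and any probability vectors α, β, the inequalities B₂(α,β) ≤ W₁(α,β) ≤ m^{1/2} B₂(α,β) hold, where W₁ is the 1-Wasserstein distance with respect to the shortest-path metric and B₂ is the 2-Beckmann distance. -/

import Mathlib

open Matrix Finset

/-- A walk in a graph given by oriented edge endpoints `ends : Fin m → Fin n × Fin n`:
a list of steps, each an edge together with a direction of traversal. -/
def IsWalk {n m : ℕ} (ends : Fin m → Fin n × Fin n) :
    Fin n → Fin n → List (Fin m × Bool) → Prop
  | i, j, [] => i = j
  | i, j, (e, true) :: rest => (ends e).1 = i ∧ IsWalk ends (ends e).2 j rest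
  | i, j, (e, false) :: rest => (ends e).2 = i ∧ IsWalk ends (ends e).1 j rest

/-!
Both inequalities go through the 1-Beckmann cost `min ‖J‖₁` and the comparison
`‖J‖₂ ≤ ‖J‖₁ ≤ √m ‖J‖₂`.

Sending the mass of a coupling along shortest walks gives a flow whose ℓ¹ norm is at most the
transport cost. Conversely, a flow `J` moving `|J e|` across each edge `e` is a transport plan of
cost at most `‖J‖₁`, except that mass may pass through intermediate vertices. Among such plans of
cost at most `‖J‖₁`, one of least total mass `transportCost 1` exists by compactness, and it has no
transit: rerouting `i → k → j` as `i → j` lowers the mass and, by the triangle inequality, not the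
cost. Putting the mass that stays put on the diagonal then gives a coupling.
-/

lemma csInf_le_csInf_of_forall_exists_le {α : Type*} [ConditionallyCompleteLattice α]
    {s t : Set α} (hs : BddBelow s) (ht : t.Nonempty) (h : ∀ y ∈ t, ∃ x ∈ s, x ≤ y) :
    sInf s ≤ sInf t :=
  le_csInf ht fun y hy => let ⟨_, hx, hxy⟩ := h y hy; (csInf_le hs hx).trans hxy

section Norms

variable {ι : Type*} [Fintype ι]

lemma sqrt_sum_sq_le_sum_abs (x : ι → ℝ) : √(∑ i, x i ^ 2) ≤ ∑ i, |x i| := by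
  rw [Real.sqrt_le_left (by positivity)]
  simpa only [sq_abs] using sum_sq_le_sq_sum_of_nonneg (s := univ) fun i _ => abs_nonneg (x i)

lemma sum_abs_le_sqrt_card_mul_sqrt_sum_sq (x : ι → ℝ) :
    ∑ i, |x i| ≤ √(Fintype.card ι) * √(∑ i, x i ^ 2) := by
  rw [← Real.sqrt_mul (by positivity), Real.le_sqrt (by positivity) (by positivity)]
  simpa only [sq_abs, card_univ] using sq_sum_le_card_mul_sum_sq (s := univ) (f := fun i => |x i|)

end Norms

section Transport

variable {ι : Type*} [Fintype ι] {d : ι → ι → ℝ} {α β : ι → ℝ} {π π₀ : Matrix ι ι ℝ}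

def transportCost (d : ι → ι → ℝ) (π : Matrix ι ι ℝ) : ℝ := ∑ i, ∑ j, π i j * d i j

@[simp]
lemma transportCost_add (d : ι → ι → ℝ) (π σ : Matrix ι ι ℝ) :
    transportCost d (π + σ) = transportCost d π + transportCost d σ := by
  simp only [transportCost, Matrix.add_apply, add_mul, sum_add_distrib]

@[simp]
lemma transportCost_sub (d : ι → ι → ℝ) (π σ : Matrix ι ι ℝ) :
    transportCost d (π - σ) = transportCost d π - transportCost d σ := by
  simp only [transportCost, Matrix.sub_apply, sub_mul, sum_sub_distrib]

@[simp]
lemma transportCost_single [DecidableEq ι] (d : ι → ι → ℝ) (i j : ι) (c : ℝ) :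
    transportCost d (single i j c) = c * d i j := by
  simp [transportCost, single_apply, ite_and]

@[simp]
lemma transportCost_sum {κ : Type*} (d : ι → ι → ℝ) (s : Finset κ) (π : κ → Matrix ι ι ℝ) :
    transportCost d (∑ e ∈ s, π e) = ∑ e ∈ s, transportCost d (π e) := by
  simp only [transportCost, Matrix.sum_apply, sum_mul]
  symm
  rw [sum_comm]
  exact sum_congr rfl fun _ _ => sum_comm

lemma transportCost_nonneg (hd : ∀ i j, 0 ≤ d i j) (hπ : ∀ i j, 0 ≤ π i j) :
    0 ≤ transportCost d π :=
  sum_nonneg fun i _ => sum_nonneg fun j _ => mul_nonneg (hπ i j) (hd i j)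

def IsCoupling (α β : ι → ℝ) (π : Matrix ι ι ℝ) : Prop :=
  (∀ i j, 0 ≤ π i j) ∧ (∀ i, ∑ j, π i j = α i) ∧ (∀ j, ∑ i, π i j = β j)

lemma isCoupling_vecMulVec (hα : ∀ i, 0 ≤ α i) (hβ : ∀ i, 0 ≤ β i) (hα1 : ∑ i, α i = 1)
    (hβ1 : ∑ i, β i = 1) : IsCoupling α β (vecMulVec α β) :=
  ⟨fun i j => mul_nonneg (hα i) (hβ j), fun i => by simp [vecMulVec_apply, ← mul_sum, hβ1],
    fun j => by simp [vecMulVec_apply, ← sum_mul, hα1]⟩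

def netOutflow (π : Matrix ι ι ℝ) (k : ι) : ℝ := ∑ j, π k j - ∑ i, π i k

@[simp]
lemma netOutflow_add (π σ : Matrix ι ι ℝ) : netOutflow (π + σ) = netOutflow π + netOutflow σ := by
  ext k
  simp only [netOutflow, Matrix.add_apply, sum_add_distrib, Pi.add_apply]
  ring

@[simp]
lemma netOutflow_sub (π σ : Matrix ι ι ℝ) : netOutflow (π - σ) = netOutflow π - netOutflow σ := by
  ext k
  simp only [netOutflow, Matrix.sub_apply, sum_sub_distrib, Pi.sub_apply]
  ring

@[simp]
lemma netOutflow_sum {κ : Type*} (s : Finset κ) (π : κ → Matrix ι ι ℝ) :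
    netOutflow (∑ e ∈ s, π e) = ∑ e ∈ s, netOutflow (π e) := by
  ext k
  simp only [netOutflow, Matrix.sum_apply, Finset.sum_apply, sum_sub_distrib]
  rw [sum_comm, sum_comm (s := univ)]

@[simp]
lemma netOutflow_single [DecidableEq ι] (i j : ι) (c : ℝ) :
    netOutflow (single i j c) = c • (Pi.single i 1 - Pi.single j 1) := by
  ext k
  simp [netOutflow, single_apply, Pi.single_apply, ite_and, eq_comm, mul_sub]

lemma IsCoupling.sum_smul_single_sub_single [DecidableEq ι] (hπ : IsCoupling α β π) :
    ∑ i, ∑ j, π i j • (Pi.single i 1 - Pi.single j 1 : ι → ℝ) = α - β := by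
  obtain ⟨-, hrow, hcol⟩ := hπ
  ext k
  simp [Finset.sum_apply, Pi.single_apply, mul_sub, sum_sub_distrib, hrow, hcol]

/-- Unlike in a coupling, mass may pass through intermediate points. -/
def IsFlowPlan (α β : ι → ℝ) (π : Matrix ι ι ℝ) : Prop :=
  (∀ i j, 0 ≤ π i j) ∧ netOutflow π = α - β

lemma IsFlowPlan.isCoupling_add_diagonal [DecidableEq ι] (hπ : IsFlowPlan α β π)
    (hrow : ∀ k, ∑ j, π k j ≤ α k) :
    IsCoupling α β (π + diagonal fun k => α k - ∑ j, π k j) := by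
  obtain ⟨hnn, hnet⟩ := hπ
  refine ⟨fun i j => ?_, fun i => ?_, fun j => ?_⟩
  · rw [Matrix.add_apply, diagonal_apply]
    split_ifs with h
    · subst h; linarith [hnn i i, hrow i]
    · simpa using hnn i j
  · simp [sum_add_distrib, diagonal_apply]
  · have hnetj : ∑ i, π j i - ∑ i, π i j = α j - β j := congrFun hnet j
    simp only [Matrix.add_apply, diagonal_apply, sum_add_distrib, sum_ite_eq', mem_univ,
      ↓reduceIte]
    linarith

lemma transportCost_add_diagonal [DecidableEq ι] (hd : ∀ i, d i i = 0) (π : Matrix ι ι ℝ)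
    (v : ι → ℝ) : transportCost d (π + diagonal v) = transportCost d π := by
  simp [transportCost, diagonal_apply, add_mul, sum_add_distrib, ite_mul, hd]

lemma IsFlowPlan.exists_lighter_of_lt_rowSum [DecidableEq ι]
    (htri : ∀ i j k, d i j ≤ d i k + d k j) (hα : ∀ i, 0 ≤ α i) (hβ : ∀ i, 0 ≤ β i)
    (hπ : IsFlowPlan α β π) {k : ι} (hk : α k < ∑ j, π k j) :
    ∃ π', IsFlowPlan α β π' ∧ transportCost d π' ≤ transportCost d π ∧
      transportCost 1 π' < transportCost 1 π := by
  obtain ⟨hnn, hnet⟩ := hπ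
  obtain ⟨j, -, hj⟩ : ∃ j ∈ univ, 0 < π k j :=
    exists_lt_of_sum_lt (by simpa using (hα k).trans_lt hk)
  have hnetk : ∑ j, π k j - ∑ i, π i k = α k - β k := congrFun hnet k
  obtain ⟨i, -, hi⟩ : ∃ i ∈ univ, 0 < π i k :=
    exists_lt_of_sum_lt (by simpa using (hβ k).trans_lt (by linarith))
  set ε := min (π i k) (π k j)
  have hε : 0 < ε := lt_min hi hj
  have hεi : ε ≤ π i k := min_le_left _ _
  have hεj : ε ≤ π k j := min_le_right _ _
  -- reroute `ε` units travelling `i → k → j` directly along `i → j`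
  refine ⟨π - single i k ε - single k j ε + single i j ε, ⟨fun a b => ?_, ?_⟩, ?_, ?_⟩
  · simp only [Matrix.add_apply, Matrix.sub_apply, single_apply]
    have := hnn a b
    split_ifs <;> grind
  · simp only [netOutflow_add, netOutflow_sub, netOutflow_single, hnet]
    module
  · simp only [transportCost_add, transportCost_sub, transportCost_single]
    nlinarith [htri i j k]
  · simp only [transportCost_add, transportCost_sub, transportCost_single, Pi.one_apply]
    linarith

lemma IsFlowPlan.exists_minimal_mass (hπ₀ : IsFlowPlan α β π₀) :
    ∃ π, IsFlowPlan α β π ∧ transportCost d π ≤ transportCost d π₀ ∧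
      ∀ π', IsFlowPlan α β π' → transportCost d π' ≤ transportCost d π₀ →
        transportCost 1 π ≤ transportCost 1 π' := by
  set S := {π | IsFlowPlan α β π ∧ transportCost d π ≤ transportCost d π₀ ∧
    transportCost 1 π ≤ transportCost 1 π₀}
  have hcont : ∀ c : ι → ι → ℝ, Continuous (transportCost c) := fun c => by
    unfold transportCost; fun_prop
  have hnet : Continuous (netOutflow (ι := ι)) := continuous_pi fun k => by
    unfold netOutflow; fun_prop
  have hS : IsClosed S := by
    simp only [S, IsFlowPlan, Set.ofPred_and, Set.ofPred_forall]
    exact ((isClosed_iInter fun i => isClosed_iInter fun j => isClosed_le continuous_const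
      (by fun_prop)).inter (isClosed_eq hnet continuous_const)).inter
      ((isClosed_le (hcont d) continuous_const).inter (isClosed_le (hcont 1) continuous_const))
  have hbox : S ⊆ Set.univ.pi fun _ => Set.univ.pi fun _ => Set.Icc 0 (transportCost 1 π₀) := by
    rintro π ⟨⟨hnn, -⟩, -, hmass⟩ i - j -
    refine ⟨hnn i j, le_trans ?_ hmass⟩
    calc π i j ≤ ∑ b, π i b := single_le_sum (fun b _ => hnn i b) (mem_univ j)
      _ ≤ ∑ a, ∑ b, π a b :=
        single_le_sum (f := fun a => ∑ b, π a b) (fun a _ => sum_nonneg fun b _ => hnn a b)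
          (mem_univ i)
      _ = transportCost 1 π := by simp [transportCost]
  obtain ⟨π, ⟨hπ, hcost, hmass⟩, hmin⟩ :=
    ((isCompact_univ_pi fun _ => isCompact_univ_pi fun _ => isCompact_Icc).of_isClosed_subset
      hS hbox).exists_isMinOn ⟨π₀, hπ₀, le_rfl, le_rfl⟩
      (hcont 1).continuousOn
  refine ⟨π, hπ, hcost, fun π' hπ' hcost' => ?_⟩
  by_cases h : transportCost 1 π' ≤ transportCost 1 π₀
  · exact hmin ⟨hπ', hcost', h⟩
  · linarith

theorem IsFlowPlan.exists_isCoupling_transportCost_le [DecidableEq ι] (hd : ∀ i, d i i = 0)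
    (htri : ∀ i j k, d i j ≤ d i k + d k j) (hα : ∀ i, 0 ≤ α i) (hβ : ∀ i, 0 ≤ β i)
    (hπ₀ : IsFlowPlan α β π₀) :
    ∃ π, IsCoupling α β π ∧ transportCost d π ≤ transportCost d π₀ := by
  obtain ⟨π, hπ, hcost, hmin⟩ := hπ₀.exists_minimal_mass (d := d)
  have hrow : ∀ k, ∑ j, π k j ≤ α k := fun k => not_lt.1 fun hk =>
    let ⟨π', hπ', hcost', hmass'⟩ := hπ.exists_lighter_of_lt_rowSum htri hα hβ hk
    (hmass'.trans_le (hmin π' hπ' (hcost'.trans hcost))).false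
  exact ⟨_, hπ.isCoupling_add_diagonal hrow, (transportCost_add_diagonal hd _ _).trans_le hcost⟩

end Transport

section Incidence

variable {V E : Type*} [DecidableEq V] (ends : E → V × V)

def incidenceMatrix : Matrix V E ℝ :=
  of fun i e => (if (ends e).1 = i then 1 else 0) - (if (ends e).2 = i then 1 else 0)

lemma incidenceMatrix_mulVec_single [Fintype E] [DecidableEq E] (e : E) (c : ℝ) :
    incidenceMatrix ends *ᵥ Pi.single e c =
      c • (Pi.single (ends e).1 1 - Pi.single (ends e).2 1) := by
  ext i
  simp only [mulVec_single, incidenceMatrix, Pi.smul_apply, Pi.sub_apply, Pi.single_apply,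
    col_apply, of_apply, MulOpposite.smul_eq_mul_unop, MulOpposite.unop_op, smul_eq_mul,
    eq_comm (a := i)]
  ring

lemma incidenceMatrix_mulVec [Fintype E] (J : E → ℝ) :
    incidenceMatrix ends *ᵥ J = ∑ e, J e • (Pi.single (ends e).1 1 - Pi.single (ends e).2 1) := by
  classical
  conv_lhs => rw [← univ_sum_single J]
  simp only [mulVec_sum, incidenceMatrix_mulVec_single]

def edgePlan [Fintype E] (J : E → ℝ) : Matrix V V ℝ :=
  ∑ e, (single (ends e).1 (ends e).2 (J e)⁺ + single (ends e).2 (ends e).1 (J e)⁻)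

variable {ends}

lemma isFlowPlan_edgePlan [Fintype V] [Fintype E] {α β : V → ℝ} {J : E → ℝ}
    (hJ : incidenceMatrix ends *ᵥ J = α - β) : IsFlowPlan α β (edgePlan ends J) := by
  refine ⟨fun i j => ?_, ?_⟩
  · simp only [edgePlan, Matrix.sum_apply, Matrix.add_apply, single_apply]
    exact sum_nonneg fun e _ => add_nonneg (by split_ifs <;> simp [posPart_nonneg])
      (by split_ifs <;> simp [negPart_nonneg])
  · rw [← hJ, incidenceMatrix_mulVec, edgePlan, netOutflow_sum]
    refine sum_congr rfl fun e _ => ?_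
    rw [netOutflow_add, netOutflow_single, netOutflow_single]
    conv_rhs => rw [← posPart_sub_negPart (J e)]
    module

lemma transportCost_edgePlan_le [Fintype V] [Fintype E] {d : V → V → ℝ} (J : E → ℝ)
    (hfst : ∀ e, d (ends e).1 (ends e).2 ≤ 1) (hsnd : ∀ e, d (ends e).2 (ends e).1 ≤ 1) :
    transportCost d (edgePlan ends J) ≤ ∑ e, |J e| := by
  simp only [edgePlan, transportCost_sum, transportCost_add, transportCost_single]
  refine sum_le_sum fun e _ => ?_
  calc (J e)⁺ * d (ends e).1 (ends e).2 + (J e)⁻ * d (ends e).2 (ends e).1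
      ≤ (J e)⁺ * 1 + (J e)⁻ * 1 := by gcongr; exacts [hfst e, hsnd e]
    _ = |J e| := by rw [mul_one, mul_one, posPart_add_negPart]

end Incidence

section WalkFlow

variable {E : Type*} [DecidableEq E]

def walkFlow : List (E × Bool) → E → ℝ
  | [] => 0
  | (e, b) :: s => Pi.single e (if b then 1 else -1) + walkFlow s

lemma sum_abs_walkFlow_le [Fintype E] (s : List (E × Bool)) :
    ∑ e, |walkFlow s e| ≤ s.length := by
  induction s with
  | nil => simp [walkFlow]
  | cons p s ih =>
    obtain ⟨e, b⟩ := p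
    calc ∑ x, |walkFlow ((e, b) :: s) x|
        ≤ ∑ x, (|(Pi.single e (if b then 1 else -1) : E → ℝ) x| + |walkFlow s x|) :=
          sum_le_sum fun x _ => by rw [walkFlow, Pi.add_apply]; exact abs_add_le _ _
      _ = 1 + ∑ x, |walkFlow s x| := by
          rw [sum_add_distrib]
          simp [Pi.single_apply, apply_ite]
      _ ≤ ((e, b) :: s).length := by
          rw [List.length_cons, Nat.cast_succ]
          linarith

end WalkFlow

section Walks

variable {n m : ℕ} {ends : Fin m → Fin n × Fin n}

lemma IsWalk.append {i j k : Fin n} {s t : List (Fin m × Bool)} (hs : IsWalk ends i j s)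
    (ht : IsWalk ends j k t) : IsWalk ends i k (s ++ t) := by
  induction s generalizing i with
  | nil => obtain rfl : i = j := hs; exact ht
  | cons p s ih => obtain ⟨e, _ | _⟩ := p <;> exact ⟨hs.1, ih hs.2⟩

lemma incidenceMatrix_mulVec_walkFlow {i j : Fin n} {s : List (Fin m × Bool)}
    (hs : IsWalk ends i j s) :
    incidenceMatrix ends *ᵥ walkFlow s = Pi.single i 1 - Pi.single j 1 := by
  induction s generalizing i with
  | nil => obtain rfl : i = j := hs; simp [walkFlow]
  | cons p s ih =>
    obtain ⟨e, _ | _⟩ := p <;> obtain ⟨rfl, hs⟩ := hs <;>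
      simp only [walkFlow, mulVec_add, incidenceMatrix_mulVec_single, ih hs, Bool.false_eq_true,
        ↓reduceIte] <;> module

variable (ends) in
noncomputable def walkDist (i j : Fin n) : ℝ :=
  sInf {c : ℝ | ∃ s : List (Fin m × Bool), IsWalk ends i j s ∧ c = (s.length : ℝ)}

lemma walkDist_nonneg (i j : Fin n) : 0 ≤ walkDist ends i j :=
  Real.sInf_nonneg (by rintro _ ⟨s, -, rfl⟩; positivity)

lemma walkDist_le_length {i j : Fin n} {s : List (Fin m × Bool)} (hs : IsWalk ends i j s) :
    walkDist ends i j ≤ s.length :=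
  csInf_le ⟨0, by rintro _ ⟨s, -, rfl⟩; positivity⟩ ⟨s, hs, rfl⟩

lemma walkDist_self (i : Fin n) : walkDist ends i i = 0 :=
  le_antisymm (by simpa using walkDist_le_length (ends := ends) (s := []) rfl)
    (walkDist_nonneg i i)

lemma walkDist_fst_snd_le_one (e : Fin m) : walkDist ends (ends e).1 (ends e).2 ≤ 1 := by
  simpa using walkDist_le_length (s := [(e, true)]) ⟨rfl, rfl⟩

lemma walkDist_snd_fst_le_one (e : Fin m) : walkDist ends (ends e).2 (ends e).1 ≤ 1 := by
  simpa using walkDist_le_length (s := [(e, false)]) ⟨rfl, rfl⟩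

lemma exists_isWalk_length_eq_walkDist {i j : Fin n} (h : ∃ s, IsWalk ends i j s) :
    ∃ s, IsWalk ends i j s ∧ (s.length : ℝ) = walkDist ends i j := by
  classical
  have hP : ∃ k, ∃ s, IsWalk ends i j s ∧ s.length = k :=
    let ⟨s, hs⟩ := h; ⟨_, s, hs, rfl⟩
  obtain ⟨s, hs, hlen⟩ := Nat.find_spec hP
  refine ⟨s, hs, le_antisymm (le_csInf ⟨_, s, hs, rfl⟩ ?_) (walkDist_le_length hs)⟩
  rintro _ ⟨t, ht, rfl⟩
  rw [hlen]
  exact_mod_cast Nat.find_min' hP ⟨t, ht, rfl⟩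

lemma walkDist_triangle {i j k : Fin n} (hik : ∃ s, IsWalk ends i k s)
    (hkj : ∃ s, IsWalk ends k j s) :
    walkDist ends i j ≤ walkDist ends i k + walkDist ends k j := by
  obtain ⟨s, hs, hs_len⟩ := exists_isWalk_length_eq_walkDist hik
  obtain ⟨t, ht, ht_len⟩ := exists_isWalk_length_eq_walkDist hkj
  simpa [← hs_len, ← ht_len] using walkDist_le_length (hs.append ht)

theorem exists_flow_of_isCoupling (hconn : ∀ i j : Fin n, ∃ s, IsWalk ends i j s)
    {α β : Fin n → ℝ} {π : Matrix (Fin n) (Fin n) ℝ} (hπ : IsCoupling α β π) :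
    ∃ J, incidenceMatrix ends *ᵥ J = α - β ∧ ∑ e, |J e| ≤ transportCost (walkDist ends) π := by
  choose s hs hlen using fun i j => exists_isWalk_length_eq_walkDist (hconn i j)
  refine ⟨∑ i, ∑ j, π i j • walkFlow (s i j), ?_, ?_⟩
  · simp only [mulVec_sum, mulVec_smul, incidenceMatrix_mulVec_walkFlow (hs _ _)]
    exact hπ.sum_smul_single_sub_single
  simp only [Finset.sum_apply]
  calc ∑ e, |∑ i, ∑ j, (π i j • walkFlow (s i j)) e|
      ≤ ∑ e, ∑ i, ∑ j, π i j * |walkFlow (s i j) e| := by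
        refine sum_le_sum fun e _ => (abs_sum_le_sum_abs _ _).trans (sum_le_sum fun i _ => ?_)
        refine (abs_sum_le_sum_abs _ _).trans (sum_le_sum fun j _ => ?_)
        rw [Pi.smul_apply, smul_eq_mul, abs_mul, abs_of_nonneg (hπ.1 i j)]
    _ = ∑ i, ∑ j, π i j * ∑ e, |walkFlow (s i j) e| := by
        simp only [mul_sum]
        rw [sum_comm]
        exact sum_congr rfl fun _ _ => sum_comm
    _ ≤ transportCost (walkDist ends) π := by
        refine sum_le_sum fun i _ => sum_le_sum fun j _ => ?_
        rw [← hlen]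
        exact mul_le_mul_of_nonneg_left (sum_abs_walkFlow_le _) (hπ.1 i j)

theorem exists_isCoupling_of_flow (hconn : ∀ i j : Fin n, ∃ s, IsWalk ends i j s)
    {α β : Fin n → ℝ} (hα : ∀ i, 0 ≤ α i) (hβ : ∀ i, 0 ≤ β i) {J : Fin m → ℝ}
    (hJ : incidenceMatrix ends *ᵥ J = α - β) :
    ∃ π, IsCoupling α β π ∧ transportCost (walkDist ends) π ≤ ∑ e, |J e| :=
  ((isFlowPlan_edgePlan hJ).exists_isCoupling_transportCost_le walkDist_self
    (fun _ _ _ => walkDist_triangle (hconn _ _) (hconn _ _)) hα hβ).imp fun _ h =>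
    ⟨h.1, h.2.trans (transportCost_edgePlan_le J walkDist_fst_snd_le_one walkDist_snd_fst_le_one)⟩

end Walks

theorem b2_w1_sandwich_unweighted_general
    (n m : ℕ) (ends : Fin m → Fin n × Fin n)
    (B : Matrix (Fin n) (Fin m) ℝ)
    (hB : ∀ i e, B i e =
      (if (ends e).1 = i then (1 : ℝ) else 0) - (if (ends e).2 = i then 1 else 0))
    (hconn : ∀ i j : Fin n, ∃ s : List (Fin m × Bool), IsWalk ends i j s)
    (α β : Fin n → ℝ)
    (hα : (∀ i, 0 ≤ α i) ∧ ∑ i, α i = 1)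
    (hβ : (∀ i, 0 ≤ β i) ∧ ∑ i, β i = 1) :
    let d : Fin n → Fin n → ℝ := fun i j =>
      sInf {c : ℝ | ∃ s : List (Fin m × Bool), IsWalk ends i j s ∧ c = (s.length : ℝ)}
    let B2 : ℝ := sInf {c : ℝ | ∃ J : Fin m → ℝ, B.mulVec J = α - β ∧
      c = Real.sqrt (∑ e, (J e) ^ 2)}
    let W1 : ℝ := sInf {c : ℝ | ∃ π : Matrix (Fin n) (Fin n) ℝ,
      (∀ i j, 0 ≤ π i j) ∧ (∀ i, ∑ j, π i j = α i) ∧ (∀ j, ∑ i, π i j = β j) ∧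
      c = ∑ i, ∑ j, π i j * d i j}
    B2 ≤ W1 ∧ W1 ≤ Real.sqrt m * B2 := by
  intro d B2 W1
  obtain rfl : B = incidenceMatrix ends := Matrix.ext hB
  have hprod := isCoupling_vecMulVec hα.1 hβ.1 hα.2 hβ.2
  obtain ⟨J₀, hJ₀, -⟩ := exists_flow_of_isCoupling hconn hprod
  constructor
  · refine csInf_le_csInf_of_forall_exists_le ⟨0, ?_⟩
      ⟨_, _, hprod.1, hprod.2.1, hprod.2.2, rfl⟩ ?_
    · rintro _ ⟨J, -, rfl⟩
      positivity
    rintro _ ⟨π, h₁, h₂, h₃, rfl⟩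
    obtain ⟨J, hJ, hle⟩ := exists_flow_of_isCoupling hconn ⟨h₁, h₂, h₃⟩
    exact ⟨_, ⟨J, hJ, rfl⟩, (sqrt_sum_sq_le_sum_abs J).trans hle⟩
  · rw [← smul_eq_mul, ← Real.sInf_smul_of_nonneg (Real.sqrt_nonneg _)]
    refine csInf_le_csInf_of_forall_exists_le ⟨0, ?_⟩
      ⟨_, Set.smul_mem_smul_set ⟨J₀, hJ₀, rfl⟩⟩ ?_
    · rintro _ ⟨π, h₁, -, -, rfl⟩
      exact transportCost_nonneg walkDist_nonneg h₁
    rintro _ ⟨_, ⟨J, hJ, rfl⟩, rfl⟩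
    obtain ⟨π, ⟨h₁, h₂, h₃⟩, hle⟩ := exists_isCoupling_of_flow hconn hα.1 hβ.1 hJ
    refine ⟨_, ⟨π, h₁, h₂, h₃, rfl⟩, hle.trans ?_⟩
    simpa using sum_abs_le_sqrt_card_mul_sqrt_sum_sq J

/-- For an unweighted connected graph with `m` edges and
probability vectors `α, β`, one has `B₂(α,β) ≤ W₁(α,β) ≤ √m · B₂(α,β)`,
where `W₁` uses the (unit-weight) shortest-path metric. -/
theorem b2_w1_sandwich_unweighted
    (n m : ℕ) (ends : Fin m → Fin n × Fin n)
    (hloop : ∀ e, (ends e).1 ≠ (ends e).2)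
    (B : Matrix (Fin n) (Fin m) ℝ)
    (hB : ∀ i e, B i e =
      (if (ends e).1 = i then (1 : ℝ) else 0) - (if (ends e).2 = i then 1 else 0))
    (hconn : ∀ i j : Fin n, ∃ s : List (Fin m × Bool), IsWalk ends i j s)
    (α β : Fin n → ℝ)
    (hα : (∀ i, 0 ≤ α i) ∧ ∑ i, α i = 1)
    (hβ : (∀ i, 0 ≤ β i) ∧ ∑ i, β i = 1) :
    let d : Fin n → Fin n → ℝ := fun i j =>
      sInf {c : ℝ | ∃ s : List (Fin m × Bool), IsWalk ends i j s ∧ c = (s.length : ℝ)}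
    let B2 : ℝ := sInf {c : ℝ | ∃ J : Fin m → ℝ, B.mulVec J = α - β ∧
      c = Real.sqrt (∑ e, (J e) ^ 2)}
    let W1 : ℝ := sInf {c : ℝ | ∃ π : Matrix (Fin n) (Fin n) ℝ,
      (∀ i j, 0 ≤ π i j) ∧ (∀ i, ∑ j, π i j = α i) ∧ (∀ j, ∑ i, π i j = β j) ∧
      c = ∑ i, ∑ j, π i j * d i j}
    B2 ≤ W1 ∧ W1 ≤ Real.sqrt m * B2 :=
  b2_w1_sandwich_unweighted_general n m ends B hB hconn α β hα hβ
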